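/- arXiv:1410.7115 — 2 statements merged into one kernel-verified Lean document; each statement's English description precedes it below -/
import Mathlib

section
/- Let G be an abelian group that is not cyclic, and let g be an element of G. If v, w, x are elements of G with v + w = x that generate G, then it is not the case that v, w, x are all congruent to each other modulo the subgroup generated by g. -/
theorem stmt_0 {G : Type*} [AddCommGroup G] (hnc : ¬ IsAddCyclic G)
    (g v w x : G) (hsum : v + w = x)
    (hgen : AddSubgroup.closure ({v, w, x} : Set G) = ⊤) :
    ¬ (v - w ∈ AddSubgroup.zmultiples g ∧ w - x ∈ AddSubgroup.zmultiples g ∧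
        v - x ∈ AddSubgroup.zmultiples g) := by
  rintro ⟨h1, h2, h3⟩
  have hv : v ∈ AddSubgroup.zmultiples g := by
    have : w - x = -v := by rw [← hsum]; abel
    rw [this] at h2
    simpa using (AddSubgroup.zmultiples g).neg_mem h2
  have hw : w ∈ AddSubgroup.zmultiples g := by
    have : v - x = -w := by rw [← hsum]; abel
    rw [this] at h3
    simpa using (AddSubgroup.zmultiples g).neg_mem h3
  have hx : x ∈ AddSubgroup.zmultiples g := by
    rw [← hsum]; exact (AddSubgroup.zmultiples g).add_mem hv hw
  apply hnc
  refine ⟨⟨g, fun y => ?_⟩⟩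
  have : AddSubgroup.closure ({v, w, x} : Set G) ≤ AddSubgroup.zmultiples g := by
    apply AddSubgroup.closure_le _ |>.2
    rintro z (rfl | rfl | rfl) <;> assumption
  have := hgen ▸ this
  exact this (AddSubgroup.mem_top y)
end

section
/- In ℤ × ℤ, for any element g, there is no triple (v, w, x) with v + w = x such that v, w, x generate ℤ × ℤ and v, w, x are pairwise congruent modulo the subgroup generated by g. -/
theorem stmt_2 (g : ℤ × ℤ) :
    ¬ ∃ v w x : ℤ × ℤ, v + w = x ∧
      AddSubgroup.closure ({v, w, x} : Set (ℤ × ℤ)) = ⊤ ∧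
      v - w ∈ AddSubgroup.zmultiples g ∧ w - x ∈ AddSubgroup.zmultiples g ∧
      v - x ∈ AddSubgroup.zmultiples g := by
  rintro ⟨v, w, x, hvw, htop, h1, h2, h3⟩
  have hv : v ∈ AddSubgroup.zmultiples g := by
    have : -v ∈ AddSubgroup.zmultiples g := by
      have := h2; rw [← hvw] at this
      simpa [sub_add_eq_sub_sub] using this
    simpa using (AddSubgroup.zmultiples g).neg_mem this
  have hw : w ∈ AddSubgroup.zmultiples g := by
    have : -w ∈ AddSubgroup.zmultiples g := by
      have := h3; rw [← hvw] at this
      simpa [sub_add_eq_sub_sub] using this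
    simpa using (AddSubgroup.zmultiples g).neg_mem this
  have hx : x ∈ AddSubgroup.zmultiples g := by
    rw [← hvw]; exact add_mem hv hw
  have hle : (⊤ : AddSubgroup (ℤ × ℤ)) ≤ AddSubgroup.zmultiples g := by
    rw [← htop]
    apply (AddSubgroup.closure_le _).2
    intro y hy
    rcases hy with rfl | rfl | rfl
    · exact hv
    · exact hw
    · exact hx
  obtain ⟨k, hk⟩ := hle (AddSubgroup.mem_top ((1, 0) : ℤ × ℤ))
  obtain ⟨m, hm⟩ := hle (AddSubgroup.mem_top ((0, 1) : ℤ × ℤ))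
  have hk1 : k * g.1 = 1 := by have := congrArg Prod.fst hk; simpa [smul_eq_mul] using this
  have hk2 : k * g.2 = 0 := by have := congrArg Prod.snd hk; simpa [smul_eq_mul] using this
  have hm2 : m * g.2 = 1 := by have := congrArg Prod.snd hm; simpa [smul_eq_mul] using this
  have hk0 : k ≠ 0 := by rintro rfl; simp at hk1
  have hg2 : g.2 = 0 := by
    rcases mul_eq_zero.1 hk2 with h | h
    · exact absurd h hk0
    · exact h
  rw [hg2, mul_zero] at hm2
  exact absurd hm2 (by norm_num)
end
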